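/- There is no continuous map f from the closed unit disc D² to itself such that z ↦ conj(f(z)) is holomorphic on the open unit disc and f(z) = z for all z with |z| = 1. -/

import Mathlib

/-! If `f` is antiholomorphic on a disc of radius `r` about `c` and the identity on its boundary
circle, then `z ↦ (z - c) * conj (f z - c)` is holomorphic and equals `|z - c|² = r²` on the
circle, hence is the constant `r²` by the maximum principle; but it vanishes at `c`. -/

open Metric ComplexConjugate

theorem Complex.mul_conj_sub_eq_sq_of_mem_sphere {c z : ℂ} {r : ℝ} (hz : z ∈ sphere c r) :
    (z - c) * conj (z - c) = (r : ℂ) ^ 2 := by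
  rw [Complex.mul_conj, Complex.normSq_eq_norm_sq, ← dist_eq_norm, mem_sphere.mp hz,
    Complex.ofReal_pow]

theorem Complex.not_antiholomorphic_eqOn_id_sphere {f : ℂ → ℂ} {c : ℂ} {r : ℝ} (hr : 0 < r)
    (hfc : ContinuousOn f (closedBall c r))
    (hfd : DifferentiableOn ℂ (fun z => conj (f z)) (ball c r))
    (hfb : Set.EqOn f id (sphere c r)) : False := by
  set h : ℂ → ℂ := fun z => (z - c) * conj (f z - c)
  have hh : DiffContOnCl ℂ h (ball c r) := by
    refine ⟨?_, ?_⟩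
    · simp only [h, map_sub]
      fun_prop (disch := assumption)
    · rw [closure_ball c hr.ne']
      exact (continuousOn_id.sub continuousOn_const).mul
        (Complex.continuous_conj.comp_continuousOn (hfc.sub continuousOn_const))
  have h_sphere : Set.EqOn h (fun _ => (r : ℂ) ^ 2) (frontier (ball c r)) := by
    intro z hz
    rw [frontier_ball c hr.ne'] at hz
    simp only [h, hfb hz, id, Complex.mul_conj_sub_eq_sq_of_mem_sphere hz]
  have h_const := Complex.eqOn_closure_of_eqOn_frontier isBounded_ball hh
    diffContOnCl_const h_sphere
  have h_center : h c = (r : ℂ) ^ 2 :=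
    h_const (subset_closure (mem_ball_self hr))
  simp only [h, sub_self, zero_mul] at h_center
  exact pow_ne_zero 2 (Complex.ofReal_ne_zero.mpr hr.ne') h_center.symm

/-- There is no continuous self-map `f` of the closed unit disc which is
antiholomorphic on the open disc (i.e. `z ↦ conj (f z)` is holomorphic there) and equals
the identity on the boundary circle. -/
theorem no_antiholomorphic_identity_on_boundary :
    ¬ ∃ f : ℂ → ℂ,
        ContinuousOn f (Metric.closedBall (0 : ℂ) 1) ∧
        Set.MapsTo f (Metric.closedBall (0 : ℂ) 1) (Metric.closedBall (0 : ℂ) 1) ∧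
        DifferentiableOn ℂ (fun z => (starRingEnd ℂ) (f z)) (Metric.ball (0 : ℂ) 1) ∧
        (∀ z : ℂ, ‖z‖ = 1 → f z = z) := by
  rintro ⟨f, hfc, -, hfd, hfb⟩
  exact Complex.not_antiholomorphic_eqOn_id_sphere one_pos hfc hfd
    fun z hz => hfb z (by simpa using hz)
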